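/- Any formula φ of the multi-agent S5 language that is valid at every maximally-consistent base for every set of S5-modal relations 𝔯_A is valid (i.e., valid at every base for every 𝔯_A). -/

import Mathlib

/-- A base rule: a finite set of premiss atoms and a conclusion atom. -/
abbrev Rule := Finset ℕ × ℕ

/-- A base is a collection of base rules. -/
abbrev Base := Set Rule

/-- Derivability of an atom in a base: closure of ∅ under the rules. -/
inductive Deriv (B : Base) : ℕ → Prop where
  | step (L : Finset ℕ) (p : ℕ) (mem : (L, p) ∈ B)
      (prem : ∀ q ∈ L, Deriv B q) : Deriv B p

/-- A base is inconsistent iff every atom is derivable in it. -/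
def Inconsistent (B : Base) : Prop := ∀ p : ℕ, Deriv B p

/-- Formulae of the multi-agent modal language over agents `A`. -/
inductive Form (A : Type) where
  | atom : ℕ → Form A
  | bot  : Form A
  | imp  : Form A → Form A → Form A
  | K    : A → Form A → Form A

/-- Negation abbreviation ¬φ := φ → ⊥. -/
def Form.neg {A : Type} (φ : Form A) : Form A := Form.imp φ Form.bot

/-- Validity at a base given a family of relations on bases. -/
def Valid {A : Type} (R : A → Base → Base → Prop) : Base → Form A → Prop
  | B, .atom p => Deriv B p
  | B, .bot => ∀ p : ℕ, Deriv B p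
  | B, .imp φ ψ => ∀ C : Base, B ⊆ C → Valid R C φ → Valid R C ψ
  | B, .K a φ => ∀ C : Base, R a B C → Valid R C φ

/-- Validity of φ at ℬ from a (nonempty) set of assumptions Γ. -/
def GammaValid {A : Type} (R : A → Base → Base → Prop)
    (Γ : Set (Form A)) (B : Base) (φ : Form A) : Prop :=
  ∀ C : Base, B ⊆ C → (∀ ψ ∈ Γ, Valid R C ψ) → Valid R C φ

def Euclidean {X : Sort*} (r : X → X → Prop) : Prop :=
  ∀ x y z, r x y → r x z → r y z

/-- S5-modal relations on bases. -/
structure S5Rel (r : Base → Base → Prop) : Prop where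
  incon_succ : ∀ B, Inconsistent B →
    (∃ C, r B C ∧ Inconsistent C) ∧ ∀ D, r B D → Inconsistent D
  con_succ : ∀ B, ¬ Inconsistent B → ∀ C, r B C → ¬ Inconsistent C
  zig : ∀ B C, r B C → ∀ D, B ⊆ D → ¬ Inconsistent D → ∃ E, C ⊆ E ∧ r D E
  zag : ∀ B C, r B C → ¬ Inconsistent C → ∀ D, D ⊆ B → ∃ E, E ⊆ C ∧ r D E
  refl : ∀ B, r B B
  trans : ∀ B C D, r B C → r C D → r B D
  eucl : ∀ B C D, r B C → r B D → r C D

/-- Maximally-consistent bases. -/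
def MaxCon (B : Base) : Prop :=
  ¬ Inconsistent B ∧ ∀ δ : Rule, δ ∈ B ∨ Inconsistent (insert δ B)

/-- A formula is valid iff it is valid at every base for every family of S5-modal relations. -/
def ValidAll {A : Type} (φ : Form A) : Prop :=
  ∀ R : A → Base → Base → Prop, (∀ a, S5Rel (R a)) → ∀ B : Base, Valid R B φ

/-! Non-validity at a base propagates, by induction on the formula, to some maximally consistent
superset. Maximally consistent extensions come from Zorn's lemma applied to the bases that contain
every rule `{p} ⇒ q` and do not derive `p`: derivations are finite, so this survives unions of
chains, and a maximal such base turns inconsistent on adding any rule. For `K a φ` the zig and zag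
conditions move a refuting successor of `B` to one of a maximally consistent extension of `B`. -/

theorem Deriv.mono {B C : Base} (hBC : B ⊆ C) {p : ℕ} (h : Deriv B p) : Deriv C p := by
  induction h with
  | step L p mem _ ih => exact .step L p (hBC mem) ih

theorem Inconsistent.mono {B C : Base} (hBC : B ⊆ C) (h : Inconsistent B) : Inconsistent C :=
  fun p => (h p).mono hBC

theorem Deriv.exists_finite_subset {B : Base} {p : ℕ} (h : Deriv B p) :
    ∃ S : Base, S.Finite ∧ S ⊆ B ∧ Deriv S p := by
  induction h with
  | step L p mem _ ih =>
    choose S hfin hsub hder using ih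
    refine ⟨insert (L, p) (⋃ (q) (hq : q ∈ L), S q hq), (L.finite_toSet.biUnion' hfin).insert _,
      Set.insert_subset mem (Set.iUnion₂_subset hsub), .step L p (Set.mem_insert _ _) ?_⟩
    exact fun q hq => (hder q hq).mono <|
      (Set.subset_iUnion₂ (s := S) q hq).trans (Set.subset_insert _ _)

theorem Deriv.exists_mem_of_sUnion {c : Set Base} (hne : c.Nonempty)
    (hc : DirectedOn (· ⊆ ·) c) {p : ℕ} (h : Deriv (⋃₀ c) p) : ∃ C ∈ c, Deriv C p := by
  obtain ⟨S, hfin, hsub, hder⟩ := h.exists_finite_subset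
  obtain ⟨C, hC, hSC⟩ := hc.exists_mem_subset_of_finite_of_subset_sUnion hne hfin hsub
  exact ⟨C, hC, hder.mono hSC⟩

def explosion (p : ℕ) : Base := {δ | δ.1 = {p}}

theorem Deriv.of_union_explosion {B : Base} {p q : ℕ} (hp : ¬ Deriv B p)
    (h : Deriv (B ∪ explosion p) q) : Deriv B q := by
  induction h with
  | step L q mem _ ih =>
    rcases mem with hB | hL
    · exact .step L q hB ih
    · exact absurd (ih p (by simp [show L = {p} from hL])) hp

theorem inconsistent_of_explosion_subset {B : Base} {p : ℕ} (hB : explosion p ⊆ B)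
    (hp : Deriv B p) : Inconsistent B :=
  fun q => .step {p} q (hB rfl) (by simpa using hp)

theorem MaxCon.of_maximal {A B : Base} {p : ℕ} (hA : explosion p ⊆ A)
    (h : Maximal (fun C => A ⊆ C ∧ ¬ Deriv C p) B) : MaxCon B := by
  refine ⟨fun hB => h.prop.2 (hB p), fun δ => or_iff_not_imp_left.2 fun hδ => ?_⟩
  have hAδ : A ⊆ insert δ B := h.prop.1.trans (Set.subset_insert δ B)
  have hp : Deriv (insert δ B) p := by
    by_contra hp
    exact hδ (h.mem_of_prop_insert ⟨hAδ, hp⟩)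
  exact inconsistent_of_explosion_subset (hA.trans hAδ) hp

theorem exists_maxCon_superset_not_deriv {B : Base} {p : ℕ} (hp : ¬ Deriv B p) :
    ∃ C, B ⊆ C ∧ MaxCon C ∧ ¬ Deriv C p := by
  set S : Set Base := {C | B ∪ explosion p ⊆ C ∧ ¬ Deriv C p}
  have hchain : ∀ c ⊆ S, IsChain (· ⊆ ·) c → c.Nonempty → ∃ ub ∈ S, ∀ C ∈ c, C ⊆ ub := by
    intro c hcS hc ⟨C, hC⟩
    refine ⟨⋃₀ c, ⟨(hcS hC).1.trans (Set.subset_sUnion_of_mem hC), fun hder => ?_⟩,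
      fun _ => Set.subset_sUnion_of_mem⟩
    obtain ⟨D, hD, hDp⟩ := hder.exists_mem_of_sUnion ⟨C, hC⟩ hc.directedOn
    exact (hcS hD).2 hDp
  obtain ⟨M, hBM, hM⟩ := zorn_subset_nonempty S hchain _
    ⟨subset_rfl, fun h => hp (h.of_union_explosion hp)⟩
  exact ⟨M, Set.subset_union_left.trans hBM, .of_maximal Set.subset_union_right hM, hM.prop.2⟩

theorem exists_maxCon_superset {B : Base} (hB : ¬ Inconsistent B) : ∃ C, B ⊆ C ∧ MaxCon C := by
  obtain ⟨p, hp⟩ := not_forall.1 hB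
  obtain ⟨C, hBC, hC, -⟩ := exists_maxCon_superset_not_deriv hp
  exact ⟨C, hBC, hC⟩

theorem MaxCon.eq_of_subset {B C : Base} (hB : MaxCon B) (hBC : B ⊆ C)
    (hC : ¬ Inconsistent C) : C = B := by
  refine Set.Subset.antisymm (fun δ hδ => ?_) hBC
  exact (hB.2 δ).resolve_right fun h => hC (h.mono (Set.insert_subset hδ hBC))

namespace S5Rel

variable {r : Base → Base → Prop} (hr : S5Rel r)
include hr

theorem symm {B C : Base} (h : r B C) : r C B :=
  hr.eucl B C B h (hr.refl B)

theorem inconsistent_iff {B C : Base} (h : r B C) : Inconsistent B ↔ Inconsistent C :=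
  ⟨fun hB => (hr.incon_succ B hB).2 C h, fun hC => (hr.incon_succ C hC).2 B (hr.symm h)⟩

theorem exists_superset_rel_of_superset {B C C' : Base} (h : r B C) (hCC' : C ⊆ C')
    (hC' : ¬ Inconsistent C') : ∃ E, B ⊆ E ∧ r E C' := by
  obtain ⟨E, hBE, hC'E⟩ := hr.zig C B (hr.symm h) C' hCC' hC'
  exact ⟨E, hBE, hr.symm hC'E⟩

end S5Rel

section Valid

variable {A : Type} {R : A → Base → Base → Prop} (hR : ∀ a, S5Rel (R a))
include hR

theorem valid_of_inconsistent (φ : Form A) {B : Base} (hB : Inconsistent B) : Valid R B φ := by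
  induction φ generalizing B with
  | atom p => exact hB p
  | bot => exact hB
  | imp φ ψ _ ihψ => exact fun C hBC _ => ihψ (hB.mono hBC)
  | K a φ ih => exact fun C hBC => ih (((hR a).inconsistent_iff hBC).1 hB)

theorem Valid.mono {φ : Form A} {B C : Base} (hBC : B ⊆ C) (h : Valid R B φ) : Valid R C φ := by
  induction φ generalizing B C with
  | atom p => exact Deriv.mono hBC h
  | bot => exact Inconsistent.mono hBC h
  | imp φ ψ _ _ => exact fun D hCD => h D (hBC.trans hCD)
  | K a φ ih =>
    intro E hCE
    by_cases hE : Inconsistent E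
    · exact valid_of_inconsistent hR φ hE
    · obtain ⟨E', hE'E, hBE'⟩ := (hR a).zag C E hCE hE B hBC
      exact ih hE'E (h E' hBE')

theorem exists_maxCon_superset_not_valid {φ : Form A} {B : Base} (h : ¬ Valid R B φ) :
    ∃ C, B ⊆ C ∧ MaxCon C ∧ ¬ Valid R C φ := by
  induction φ generalizing B with
  | atom p => exact exists_maxCon_superset_not_deriv h
  | bot =>
    obtain ⟨C, hBC, hC⟩ := exists_maxCon_superset h
    exact ⟨C, hBC, hC, hC.1⟩
  | imp φ ψ _ ihψ =>
    obtain ⟨C, hBC, hφ, hψ⟩ : ∃ C, B ⊆ C ∧ Valid R C φ ∧ ¬ Valid R C ψ := by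
      simpa only [Valid, not_forall, exists_prop] using h
    obtain ⟨D, hCD, hD, hψD⟩ := ihψ hψ
    exact ⟨D, hBC.trans hCD, hD, fun hval => hψD (hval D subset_rfl (hφ.mono hR hCD))⟩
  | K a φ ih =>
    obtain ⟨C, hBC, hφ⟩ : ∃ C, R a B C ∧ ¬ Valid R C φ := by
      simpa only [Valid, not_forall, exists_prop] using h
    obtain ⟨C', hCC', hC', hφC'⟩ := ih hφ
    -- Back from `C'` to some `E ⊇ B`, extend `E` to a maximal `D`, and forth from `D` to some
    -- consistent `F ⊇ C'`, which is then `C'` itself by maximality.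
    obtain ⟨E, hBE, hEC'⟩ := (hR a).exists_superset_rel_of_superset hBC hCC' hC'.1
    obtain ⟨D, hED, hD⟩ :=
      exists_maxCon_superset (((hR a).inconsistent_iff hEC').not.2 hC'.1)
    obtain ⟨F, hC'F, hDF⟩ := (hR a).zig E C' hEC' D hED hD.1
    have hFC' : F = C' := hC'.eq_of_subset hC'F (((hR a).inconsistent_iff hDF).not.1 hD.1)
    exact ⟨D, hBE.trans hED, hD, fun hval => hφC' (hval C' (hFC' ▸ hDF))⟩

end Valid

/-- A formula valid at all maximally-consistent bases (for all S5 relation families) is valid. -/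
theorem stmt5 {A : Type} (φ : Form A)
    (h : ∀ (R : A → Base → Base → Prop), (∀ a, S5Rel (R a)) →
      ∀ B : Base, MaxCon B → Valid R B φ) :
    ValidAll φ := by
  intro R hR B
  by_contra hB
  obtain ⟨C, -, hC, hφC⟩ := exists_maxCon_superset_not_valid hR hB
  exact hφC (h R hR C hC)
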